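/- Let M be a real n×n matrix whose columns each sum to zero. Then for every row index i, Σ_{j=1}^n m_{i,j} · det(M_{j,j}) = 0, where M_{j,j} is M with row j and column j deleted. -/

import Mathlib

/-! The column condition makes every principal minor `det M_{jj}` equal to the cofactor
`adj(M)_{ji}` for each `i`, so the sum is the `(i, i)` entry of `M * adj M = det M • 1`, and
`det M = 0` because the rows of `M` add up to zero. -/

namespace Matrix

variable {R : Type*} [CommRing R] {n : ℕ}

theorem det_eq_zero_of_sum_col_eq_zero (M : Matrix (Fin (n + 1)) (Fin (n + 1)) R)
    (hcol : ∀ j, ∑ i, M i j = 0) : M.det = 0 := by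
  rw [det_eq_sum_column_mul_submatrix_succAbove_succAbove_det M 0 0 fun j _ ↦ hcol j, hcol,
    mul_zero, zero_mul]

theorem adjugate_apply_eq_det_updateCol_single {m : Type*} [Fintype m] [DecidableEq m]
    (A : Matrix m m R) (i j : m) : A.adjugate j i = (A.updateCol j (Pi.single i 1)).det := by
  rw [← cramer_apply, cramer_eq_adjugate_mulVec, mulVec_single_one]
  rfl

/-- Replacing column `j` by the basis vector `eᵢ` keeps all column sums but the `j`-th zero, so the
cofactor expansion along column `j` collapses onto the principal minor at `j`. -/
theorem adjugate_apply_eq_det_submatrix_succAbove_of_sum_col_eq_zero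
    (M : Matrix (Fin (n + 1)) (Fin (n + 1)) R) (i j : Fin (n + 1))
    (hcol : ∀ k ≠ j, ∑ l, M l k = 0) :
    M.adjugate j i = (M.submatrix j.succAbove j.succAbove).det := by
  rw [adjugate_apply_eq_det_updateCol_single,
    det_eq_sum_column_mul_submatrix_succAbove_succAbove_det _ j j fun k hk ↦ by
      simpa [updateCol_ne hk] using hcol k hk]
  simp [submatrix_updateCol_succAbove, ← two_mul, pow_mul]

end Matrix

theorem stmt_19 (n : ℕ) (M : Matrix (Fin (n + 1)) (Fin (n + 1)) ℝ)
    (hcol : ∀ j, ∑ i, M i j = 0) :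
    ∀ i, ∑ j, M i j * (M.submatrix j.succAbove j.succAbove).det = 0 := by
  intro i
  calc ∑ j, M i j * (M.submatrix j.succAbove j.succAbove).det
      = ∑ j, M i j * M.adjugate j i := by
        simp only [M.adjugate_apply_eq_det_submatrix_succAbove_of_sum_col_eq_zero i _
          fun k _ ↦ hcol k]
    _ = (M * M.adjugate) i i := (Matrix.mul_apply ..).symm
    _ = 0 := by simp [Matrix.mul_adjugate, M.det_eq_zero_of_sum_col_eq_zero hcol]
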